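/- Let C be an abelian category. Dually to the injective case, every object (c,S,f) of C◁Set with c ≠ 0 is the codomain of a proper essential epimorphism from (c ⊕ c, S', f'); consequently C◁Set has no nonzero projective objects. -/

import Mathlib

/-!
Decorate `c ⊞ c` at an index fresh for `X = (c, S, f)` (namely `S` itself, as `S ∉ S`) by the
nilpotent shift `fst ≫ inr`, and elsewhere by `f ⊕ f`. Then `fst` is a morphism onto `X`; it is
epi because epimorphisms of `C ◁ Set` are detected in `C` (cokernels inherit decorations). It is
not an isomorphism, which would carry the zero decoration of `X` at the fresh index to the
nonzero shift. It is essential, because the underlying map of any morphism into the cover is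
stable under the shift, so once it covers the first summand it also covers the second. Finally,
a projective object splits every epimorphism onto it, and a split essential epimorphism is an
isomorphism.
-/

open CategoryTheory Limits

universe v u

/-- An object of the set-decorated category `C ◁ Set`: a triple `(c, S, f)` with `c` an
object of `C`, `S` a set, and `f : S → End c`, encoded as a function `ZFSet → End c`
vanishing outside `S` (the paper's convention that `f` evaluates to `0` outside `S`). -/
structure DecObj (C : Type u) [Category.{v} C] [Preadditive C] : Type (max u v 2) where
  c : C
  S : ZFSet.{0}
  f : ZFSet.{0} → (c ⟶ c)
  hf : ∀ s : ZFSet.{0}, s ∉ S → f s = 0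

namespace DecObj

variable {C : Type u} [Category.{v} C] [Preadditive C]

/-- `ψ : c ⟶ c'` intertwines the decorations of `X` and `Y`; by the vanishing-outside-`S`
convention this is exactly the three-case condition of the paper. -/
def Intertwines (X Y : DecObj C) (ψ : X.c ⟶ Y.c) : Prop :=
  ∀ s : ZFSet.{0}, X.f s ≫ ψ = ψ ≫ Y.f s

/-- Morphisms in `C ◁ Set`. -/
@[ext]
structure Hom (X Y : DecObj C) where
  ψ : X.c ⟶ Y.c
  comm : Intertwines X Y ψ

instance : Category (DecObj C) where
  Hom := Hom
  id X := ⟨𝟙 X.c, fun s => by simp [Intertwines]⟩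
  comp g h := ⟨g.ψ ≫ h.ψ, fun s => by
    rw [← Category.assoc, g.comm s, Category.assoc, h.comm s, Category.assoc]⟩

@[simp] theorem id_ψ (X : DecObj C) : Hom.ψ (𝟙 X) = 𝟙 X.c := rfl

@[simp] theorem comp_ψ {X Y Z : DecObj C} (g : X ⟶ Y) (h : Y ⟶ Z) :
    (g ≫ h).ψ = g.ψ ≫ h.ψ := rfl

/-- The forgetful functor `U : C ◁ Set ⥤ C`. -/
def forgetDec (C : Type u) [Category.{v} C] [Preadditive C] : DecObj C ⥤ C where
  obj X := X.c
  map g := g.ψ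

end DecObj

def IsEssentialEpi {D : Type*} [Category D] {Y X : D} (e : Y ⟶ X) : Prop :=
  ∀ (Z : D) (u : Z ⟶ Y), Mono u → Epi (u ≫ e) → Epi u

theorem Projective.isIso_of_isEssentialEpi {D : Type*} [Category D] {Y X : D} [Projective X]
    (e : Y ⟶ X) [Epi e] (he : IsEssentialEpi e) : IsIso e := by
  obtain ⟨m, hm⟩ := Projective.factors (𝟙 X) e
  have : Epi m := he X m (mono_of_mono_fac hm) (by rw [hm]; infer_instance)
  refine ⟨m, (cancel_epi m).mp ?_, hm⟩
  rw [reassoc_of% hm, Category.comp_id]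

section Biprod

variable {C : Type*} [Category C] [Preadditive C] [HasBinaryBiproducts C]

theorem epi_of_epi_comp_fst_of_shift {W c : C} (a : W ⟶ c ⊞ c) (b : W ⟶ W)
    (hb : b ≫ a = a ≫ biprod.fst ≫ biprod.inr) [Epi (a ≫ biprod.fst)] : Epi a := by
  rw [Preadditive.epi_iff_cancel_zero]
  intro d k hk
  have hinr : biprod.inr ≫ k = 0 :=
    (Preadditive.epi_iff_cancel_zero _).mp inferInstance _ _ <| by
      rw [Category.assoc, ← reassoc_of% hb, hk, comp_zero]
  have hk' : k = biprod.fst ≫ biprod.inl ≫ k := by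
    conv_lhs => rw [← Category.id_comp k, ← biprod.total]
    rw [Preadditive.add_comp, Category.assoc, Category.assoc, hinr, comp_zero, add_zero]
  have hinl : biprod.inl ≫ k = 0 :=
    (Preadditive.epi_iff_cancel_zero _).mp inferInstance _ _ <| by
      rw [Category.assoc, ← hk', hk]
  rw [hk', hinl, comp_zero]

end Biprod

namespace DecObj

section Preadditive

variable {C : Type u} [Category.{v} C] [Preadditive C]

instance : (forgetDec C).Faithful where
  map_injective h := Hom.ext h

theorem Hom.f_eq_zero_of_isIso {X Y : DecObj C} (e : X ⟶ Y) [IsIso e] {s : ZFSet.{0}}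
    (hs : Y.f s = 0) : X.f s = 0 := by
  have : IsIso e.ψ := (forgetDec C).map_isIso e
  rw [← cancel_mono e.ψ, e.comm s, hs, comp_zero, zero_comp]

theorem f_self_eq_zero (X : DecObj C) : X.f X.S = 0 :=
  X.hf _ (ZFSet.mem_irrefl X.S)

end Preadditive

section Cokernel

variable {C : Type u} [Category.{v} C] [Preadditive C] [HasCokernels C]

noncomputable def cokernelObj {X Y : DecObj C} (g : X ⟶ Y) : DecObj C where
  c := cokernel g.ψ
  S := Y.S
  f s := cokernel.map g.ψ g.ψ (X.f s) (Y.f s) (g.comm s).symm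
  hf s hs := by simp only [Y.hf s hs, cokernel.map_zero]

noncomputable def cokernelπ {X Y : DecObj C} (g : X ⟶ Y) : Y ⟶ cokernelObj g :=
  ⟨cokernel.π g.ψ, fun s => by simp [cokernelObj]⟩

instance : (forgetDec C).PreservesEpimorphisms where
  preserves {X Y} g _ := by
    let zero : Y ⟶ cokernelObj g := ⟨0, fun s => by simp⟩
    have hπ : cokernelπ g = zero := (cancel_epi g).mp <| Hom.ext <| by
      simp only [comp_ψ, comp_zero, zero, cokernelπ]
      exact cokernel.condition _
    exact Preadditive.epi_of_cokernel_zero (congrArg Hom.ψ hπ)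

theorem epi_iff_epi_ψ {X Y : DecObj C} (g : X ⟶ Y) : Epi g ↔ Epi g.ψ :=
  ((forgetDec C).epi_map_iff_epi g).symm

end Cokernel

section ShiftCover

variable {C : Type u} [Category.{v} C] [Preadditive C] [HasBinaryBiproducts C]

open Classical in
noncomputable abbrev shiftCover (X : DecObj C) : DecObj C where
  c := X.c ⊞ X.c
  S := insert X.S X.S
  f s := if s = X.S then biprod.fst ≫ biprod.inr else biprod.map (X.f s) (X.f s)
  hf s hs := by
    rw [ZFSet.mem_insert_iff, not_or] at hs
    rw [if_neg hs.1, X.hf s hs.2]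
    ext <;> simp

theorem shiftCover_f_self (X : DecObj C) :
    (shiftCover X).f X.S = biprod.fst ≫ biprod.inr :=
  if_pos rfl

noncomputable abbrev shiftCoverπ (X : DecObj C) : shiftCover X ⟶ X where
  ψ := biprod.fst
  comm s := by
    by_cases hs : s = X.S
    · subst hs
      simp [f_self_eq_zero]
    · simp only [shiftCover, if_neg hs, biprod.map_fst]

instance (X : DecObj C) : Epi (shiftCoverπ X) :=
  (forgetDec C).epi_of_epi_map (inferInstanceAs (Epi biprod.fst))

theorem not_isIso_shiftCoverπ {X : DecObj C} (hX : ¬ IsZero X.c) : ¬ IsIso (shiftCoverπ X) := by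
  intro hiso
  have hshift : (biprod.fst : X.c ⊞ X.c ⟶ X.c) ≫ (biprod.inr : X.c ⟶ X.c ⊞ X.c) = 0 := by
    rw [← shiftCover_f_self]
    exact (shiftCoverπ X).f_eq_zero_of_isIso (f_self_eq_zero X)
  refine hX (IsZero.iff_id_eq_zero _ |>.mpr ?_)
  calc 𝟙 X.c = biprod.inl ≫ (biprod.fst ≫ biprod.inr) ≫ biprod.snd := by simp
    _ = 0 := by rw [hshift, zero_comp, comp_zero]

end ShiftCover

theorem isEssentialEpi_shiftCoverπ {C : Type u} [Category.{v} C] [Abelian C] (X : DecObj C) :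
    IsEssentialEpi (shiftCoverπ X) := by
  intro Z u _ hue
  rw [epi_iff_epi_ψ] at hue ⊢
  have : Epi (u.ψ ≫ biprod.fst) := hue
  exact epi_of_epi_comp_fst_of_shift u.ψ (Z.f X.S) <|
    (u.comm X.S).trans (congrArg (u.ψ ≫ ·) (shiftCover_f_self X))

end DecObj

/-- in `C ◁ Set` over an abelian `C`, every object `(c,S,f)` with `c ≠ 0`
is the codomain of a proper essential epimorphism from an object of the form
`(c ⊞ c, S', f')`; consequently `C ◁ Set` has no nonzero projective objects. -/
theorem no_nonzero_projectives (C : Type u) [Category.{v} C] [Abelian C] :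
    (∀ X : DecObj C, ¬ IsZero X.c →
      ∃ (S' : ZFSet.{0}) (f' : ZFSet.{0} → (X.c ⊞ X.c ⟶ X.c ⊞ X.c))
        (hf' : ∀ s ∉ S', f' s = 0)
        (e : (DecObj.mk (X.c ⊞ X.c) S' f' hf') ⟶ X),
        Epi e ∧ ¬ IsIso e ∧
        -- `e` is essential: no proper subobject of the domain maps onto `X` via `e`
        (∀ (Z : DecObj C) (u : Z ⟶ DecObj.mk (X.c ⊞ X.c) S' f' hf'),
          Mono u → Epi (u ≫ e) → Epi u)) ∧
    (∀ X : DecObj C, Projective X → IsZero X.c) := by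
  refine ⟨fun X hX => ⟨_, _, _, DecObj.shiftCoverπ X, inferInstance,
    DecObj.not_isIso_shiftCoverπ hX, DecObj.isEssentialEpi_shiftCoverπ X⟩, fun X _ => ?_⟩
  by_contra hX
  exact DecObj.not_isIso_shiftCoverπ hX
    (Projective.isIso_of_isEssentialEpi _ (DecObj.isEssentialEpi_shiftCoverπ X))
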